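/- Let R be an alternative ring whose additive group has no 3-torsion (3*x = 0 implies x = 0). Then every element of the commutative center of R lies in the nucleus; that is, if z commutes with all elements of R, then (z,x,y) = 0 for all x, y in R. Consequently the commutative center equals the center. -/

import Mathlib

/-!
Linearizing the left and right alternative laws shows that the associator is alternating in its
first two and in its last two arguments. If `z` commutes with everything, expanding
`(x, y, z) - (x, z, y) + (z, x, y)` shows that it vanishes, and by alternation this sum equals
`3 (x, y, z)`. Without 3-torsion, `(x, y, z) = 0`, hence `(z, x, y) = (x, y, z) = 0`.
-/

section Alternative

variable {R : Type*} [NonUnitalNonAssocRing R]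

theorem associator_swap_left (hl : ∀ x y : R, (x * x) * y = x * (x * y)) (x y z : R) :
    associator x y z = -associator y x z := by
  have h := hl (x + y) z
  simp only [add_mul, mul_add] at h
  simp only [associator_apply]
  linear_combination (norm := abel1) h - hl x z - hl y z

theorem associator_swap_right (hr : ∀ x y : R, (y * x) * x = y * (x * x)) (x y z : R) :
    associator x y z = -associator x z y := by
  have h := hr (y + z) x
  simp only [add_mul, mul_add] at h
  simp only [associator_apply]
  linear_combination (norm := abel1) h - hr y x - hr z x

theorem associator_sub_add_eq_zero_of_commute {z : R} (hz : ∀ r : R, z * r = r * z) (x y : R) :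
    associator x y z - associator x z y + associator z x y = 0 := by
  simp only [associator_apply, hz (x * y), hz x, ← hz y]
  abel

theorem associator_eq_zero_of_commute (hl : ∀ x y : R, (x * x) * y = x * (x * y))
    (hr : ∀ x y : R, (y * x) * x = y * (x * x)) (h3 : ∀ x : R, (3 : ℕ) • x = 0 → x = 0)
    {z : R} (hz : ∀ r : R, z * r = r * z) (x y : R) : associator z x y = 0 := by
  have hcyc : associator z x y = associator x y z := by
    rw [associator_swap_left hl, associator_swap_right hr, neg_neg]
  have hxyz : associator x y z = 0 := by
    apply h3
    have h := associator_sub_add_eq_zero_of_commute hz x y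
    rw [hcyc, associator_swap_right hr x z y] at h
    rw [← h]
    abel
  rw [hcyc, hxyz]

end Alternative

theorem stmt_4 {R : Type*} [NonUnitalNonAssocRing R]
    (hl : ∀ x y : R, (x*x)*y = x*(x*y))
    (hr : ∀ x y : R, (y*x)*x = y*(x*x))
    (h3 : ∀ x : R, (3 : ℕ) • x = 0 → x = 0) :
    (∀ z : R, (∀ r : R, z*r = r*z) → ∀ x y : R, (z*x)*y - z*(x*y) = 0) ∧
    {z : R | ∀ r : R, z*r = r*z}
      = {z : R | (∀ x y : R, (z*x)*y = z*(x*y)) ∧ ∀ r : R, z*r = r*z} := by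
  have hnucleus : ∀ z : R, (∀ r : R, z*r = r*z) → ∀ x y : R, (z*x)*y - z*(x*y) = 0 :=
    fun z hz => associator_eq_zero_of_commute hl hr h3 hz
  refine ⟨hnucleus, ?_⟩
  ext z
  exact ⟨fun hz => ⟨fun x y => sub_eq_zero.mp (hnucleus z hz x y), hz⟩, And.right⟩
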